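/- Let A be a unital C*-algebra, x, y, z ∈ A with ‖y‖ ≤ 1, and φ an Orlicz function. Then φ(v(x y z*)) ≤ (‖y‖ / 2)·‖φ(x x*) + φ(z z*)‖, where φ(x x*) and φ(z z*) are defined by continuous functional calculus on the positive elements x x* and z z*. -/

import Mathlib

open scoped ComplexOrder

section

variable {A : Type*} [CStarAlgebra A] [PartialOrder A] [StarOrderedRing A]

/-- A positive linear functional on `A`: `f (x* x) ≥ 0` for all `x`. -/
def IsPosLF (f : A →ₗ[ℂ] ℂ) : Prop := ∀ x : A, 0 ≤ f (star x * x)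

/-- A state on `A`: a positive linear functional with `g 1 = 1`. -/
def IsState (g : A →ₗ[ℂ] ℂ) : Prop := IsPosLF g ∧ g 1 = 1

/-- The (algebraic) numerical radius `v(x) = sup {|g x| : g a state on A}`. -/
noncomputable def nr (x : A) : ℝ :=
  sSup {r : ℝ | ∃ g : A →ₗ[ℂ] ℂ, IsState g ∧ r = ‖g x‖}

/-- An Orlicz function: `φ : [0,∞) → [0,∞)` (modelled on `ℝ`) which is continuous, convex,
non-decreasing on `[0,∞)`, with `φ 0 = 0`, `φ u > 0` for `u > 0`, and `φ u → ∞` as `u → ∞`. -/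
structure IsOrlicz (φ : ℝ → ℝ) : Prop where
  continuousOn : ContinuousOn φ (Set.Ici 0)
  convexOn : ConvexOn ℝ (Set.Ici 0) φ
  monotoneOn : MonotoneOn φ (Set.Ici 0)
  map_zero : φ 0 = 0
  pos : ∀ u : ℝ, 0 < u → 0 < φ u
  tendsto_atTop : Filter.Tendsto φ Filter.atTop Filter.atTop

/-! For a state `g`, the Cauchy–Schwarz inequality for the form `(a, b) ↦ g (b* a)` and the operator
inequality `z y* y z* ≤ ‖y‖² z z*` give `|g (x y z*)| ≤ ‖y‖ (g (x x*) + g (z z*)) / 2`. Since `φ` is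
convex with `φ 0 = 0`, it satisfies `φ (t u) ≤ t φ u` for `t ∈ [0, 1]`, and Jensen's inequality
`φ (g a) ≤ g (φ a)` holds for `a ≥ 0`. Hence
`φ |g (x y z*)| ≤ ‖y‖ / 2 · g (φ (x x*) + φ (z z*)) ≤ ‖y‖ / 2 · ‖φ (x x*) + φ (z z*)‖`,
and since `φ` is monotone and continuous the bound passes to the supremum over all states. -/

namespace IsPosLF

variable {f : A →ₗ[ℂ] ℂ}

lemma map_nonneg (hf : IsPosLF f) {a : A} (ha : 0 ≤ a) : 0 ≤ f a := by
  obtain ⟨b, rfl⟩ := CStarAlgebra.nonneg_iff_eq_star_mul_self.mp ha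
  exact hf b

noncomputable def toPositiveLinearMap (hf : IsPosLF f) : A →ₚ[ℂ] ℂ :=
  PositiveLinearMap.mk₀ f fun _ => hf.map_nonneg

end IsPosLF

namespace PositiveLinearMap

variable (f : A →ₚ[ℂ] ℂ)

lemma re_apply_star_mul_self_nonneg (a : A) : 0 ≤ (f (star a * a)).re :=
  (Complex.le_def.mp (f.map_nonneg (star_mul_self_nonneg a))).1

lemma norm_apply_star_mul_sq_le (a b : A) :
    ‖f (star a * b)‖ ^ 2 ≤ (f (star a * a)).re * (f (star b * b)).re := by
  have h := norm_inner_le_norm (𝕜 := ℂ) (f.toPreGNS a) (f.toPreGNS b)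
  rw [preGNS_inner_def, preGNS_norm_def, preGNS_norm_def] at h
  simp only [ofPreGNS_toPreGNS] at h
  calc ‖f (star a * b)‖ ^ 2 ≤ (√(f (star a * a)).re * √(f (star b * b)).re) ^ 2 := by gcongr
    _ = _ := by rw [mul_pow, Real.sq_sqrt (f.re_apply_star_mul_self_nonneg a),
      Real.sq_sqrt (f.re_apply_star_mul_self_nonneg b)]

variable {f}

lemma re_apply_le_norm (hf1 : f 1 = 1) {a : A} (ha : 0 ≤ a) : (f a).re ≤ ‖a‖ :=
  (Complex.re_le_norm _).trans (by simpa [hf1] using f.norm_apply_le_of_nonneg a ha)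

lemma norm_apply_le (hf1 : f 1 = 1) (a : A) : ‖f a‖ ≤ ‖a‖ := by
  have h := f.norm_apply_star_mul_sq_le 1 a
  simp only [star_one, one_mul, hf1, Complex.one_re] at h
  refine (pow_le_pow_iff_left₀ (norm_nonneg _) (norm_nonneg a) two_ne_zero).mp ?_
  calc ‖f a‖ ^ 2 ≤ (f (star a * a)).re := by simpa using h
    _ ≤ ‖star a * a‖ := re_apply_le_norm hf1 (star_mul_self_nonneg a)
    _ = ‖a‖ ^ 2 := by rw [CStarRing.norm_star_mul_self, sq]

lemma norm_apply_mul_mul_star_sq_le (x y z : A) :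
    ‖f (x * y * star z)‖ ^ 2 ≤ ‖y‖ ^ 2 * (f (x * star x)).re * (f (z * star z)).re := by
  have h := f.norm_apply_star_mul_sq_le (star x) (y * star z)
  simp only [star_star, ← mul_assoc, star_mul] at h
  have hz : z * (star y * y) * star z ≤ ‖y‖ ^ 2 • (z * star z) := by
    simpa [CStarRing.norm_star_mul_self, sq] using
      CStarAlgebra.star_right_conjugate_le_norm_smul (a := z) (b := star y * y)
  have hzf : (f (z * star y * y * star z)).re ≤ ‖y‖ ^ 2 * (f (z * star z)).re := by
    simpa [mul_assoc, ← Complex.ofReal_pow, Complex.re_ofReal_mul] using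
      (Complex.le_def.mp (OrderHomClass.mono f hz)).1
  have hx : 0 ≤ (f (x * star x)).re := by
    simpa using f.re_apply_star_mul_self_nonneg (star x)
  calc ‖f (x * y * star z)‖ ^ 2 ≤ (f (x * star x)).re * (‖y‖ ^ 2 * (f (z * star z)).re) :=
        h.trans (mul_le_mul_of_nonneg_left hzf hx)
    _ = _ := by ring

end PositiveLinearMap

/-- A convex lower semicontinuous function is the supremum of its affine minorants, and `f`
commutes with the functional calculus of affine functions. -/
lemma ConvexOn.map_re_apply_le_re_apply_cfc {φ : ℝ → ℝ} (hφ : ConvexOn ℝ (Set.Ici 0) φ)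
    (hφc : ContinuousOn φ (Set.Ici 0)) {f : A →ₚ[ℂ] ℂ} (hf1 : f 1 = 1) {a : A} (ha : 0 ≤ a) :
    φ (f a).re ≤ (f (cfc φ a)).re := by
  have hspec : spectrum ℝ a ⊆ Set.Ici 0 := fun _ hu => spectrum_nonneg_of_nonneg ha hu
  have hfa : (f a).re ∈ Set.Ici 0 := (Complex.le_def.mp (f.map_nonneg ha)).1
  refine le_of_forall_lt_imp_le_of_dense fun b hb => ?_
  obtain ⟨c, c', hcφ, rfl⟩ :=
    hφ.exists_affine_le_of_lt_real hfa hb isClosed_Ici hφc.lowerSemicontinuousOn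
  have hle : cfc (fun u => c * u + c') a ≤ cfc φ a :=
    cfc_mono (fun u hu => hcφ u (hspec hu)) (by fun_prop) (hφc.mono hspec)
  have hcfc : cfc (fun u => c * u + c') a = c • a + algebraMap ℝ A c' := by
    rw [cfc_add _ _ _ (by fun_prop) (by fun_prop), cfc_const_mul _ _ _ (by fun_prop),
      cfc_id' ℝ a, cfc_const c' a]
  have hf_const : f (algebraMap ℝ A c') = c' := by
    rw [Algebra.algebraMap_eq_smul_one, f.map_smul_of_tower, hf1, Complex.real_smul, mul_one]
  simpa [hcfc, hf_const, Complex.re_ofReal_mul] using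
    (Complex.le_def.mp (OrderHomClass.mono f hle)).1

namespace IsOrlicz

variable {φ : ℝ → ℝ}

lemma nonneg (hφ : IsOrlicz φ) {u : ℝ} (hu : 0 ≤ u) : 0 ≤ φ u :=
  hφ.map_zero ▸ hφ.monotoneOn Set.self_mem_Ici hu hu

lemma map_mul_le (hφ : IsOrlicz φ) {t u : ℝ} (ht₀ : 0 ≤ t) (ht₁ : t ≤ 1) (hu : 0 ≤ u) :
    φ (t * u) ≤ t * φ u := by
  simpa [hφ.map_zero] using
    hφ.convexOn.2 (Set.mem_Ici.2 hu) Set.self_mem_Ici ht₀ (sub_nonneg.2 ht₁) (add_sub_cancel t 1)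

lemma map_add_div_two_le (hφ : IsOrlicz φ) {p q : ℝ} (hp : 0 ≤ p) (hq : 0 ≤ q) :
    φ ((p + q) / 2) ≤ (φ p + φ q) / 2 := by
  have h := hφ.convexOn.2 (Set.mem_Ici.2 hp) (Set.mem_Ici.2 hq) (by norm_num : (0 : ℝ) ≤ 1 / 2)
    (by norm_num : (0 : ℝ) ≤ 1 / 2) (by norm_num)
  simp only [smul_eq_mul] at h
  rw [show (p + q) / 2 = 1 / 2 * p + 1 / 2 * q by ring]
  linarith

lemma map_csSup_le (hφ : IsOrlicz φ) {S : Set ℝ} (hS : S ⊆ Set.Ici 0) (hbdd : BddAbove S)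
    {C : ℝ} (hC : 0 ≤ C) (h : ∀ s ∈ S, φ s ≤ C) : φ (sSup S) ≤ C := by
  rcases S.eq_empty_or_nonempty with rfl | hne
  · rwa [Real.sSup_empty, hφ.map_zero]
  have hsup : sSup S ∈ Set.Ici 0 := Real.sSup_nonneg hS
  rw [(hφ.monotoneOn.mono hS).map_csSup_of_continuousWithinAt
    ((hφ.continuousOn _ hsup).mono hS) hne hbdd]
  exact csSup_le (hne.image φ) (Set.forall_mem_image.2 h)

lemma map_norm_apply_mul_mul_star_le (hφ : IsOrlicz φ) {f : A →ₚ[ℂ] ℂ} (hf1 : f 1 = 1)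
    (x y z : A) (hy : ‖y‖ ≤ 1) :
    φ ‖f (x * y * star z)‖ ≤ (‖y‖ / 2) * ‖cfc φ (x * star x) + cfc φ (z * star z)‖ := by
  set p := (f (x * star x)).re
  set q := (f (z * star z)).re
  have hp : 0 ≤ p := by simpa using f.re_apply_star_mul_self_nonneg (star x)
  have hq : 0 ≤ q := by simpa using f.re_apply_star_mul_self_nonneg (star z)
  have hm : ‖f (x * y * star z)‖ ≤ ‖y‖ * ((p + q) / 2) := by
    refine (pow_le_pow_iff_left₀ (norm_nonneg _) (by positivity) two_ne_zero).mp ?_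
    -- AM-GM: `p * q ≤ ((p + q) / 2) ^ 2`
    nlinarith [f.norm_apply_mul_mul_star_sq_le x y z, sq_nonneg (p - q), sq_nonneg ‖y‖]
  have hcfc {a : A} (ha : 0 ≤ a) : 0 ≤ cfc φ a :=
    cfc_nonneg fun _ hu => hφ.nonneg (spectrum_nonneg_of_nonneg ha hu)
  have jensen {a : A} (ha : 0 ≤ a) : φ (f a).re ≤ (f (cfc φ a)).re :=
    hφ.convexOn.map_re_apply_le_re_apply_cfc hφ.continuousOn hf1 ha
  calc φ ‖f (x * y * star z)‖ ≤ φ (‖y‖ * ((p + q) / 2)) :=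
        hφ.monotoneOn (norm_nonneg _) (Set.mem_Ici.2 (by positivity)) hm
    _ ≤ ‖y‖ * φ ((p + q) / 2) := hφ.map_mul_le (norm_nonneg y) hy (by positivity)
    _ ≤ ‖y‖ * ((φ p + φ q) / 2) := by gcongr; exact hφ.map_add_div_two_le hp hq
    _ ≤ ‖y‖ * (((f (cfc φ (x * star x))).re + (f (cfc φ (z * star z))).re) / 2) := by
        gcongr
        · exact jensen (mul_star_self_nonneg x)
        · exact jensen (mul_star_self_nonneg z)
    _ = (‖y‖ / 2) * (f (cfc φ (x * star x) + cfc φ (z * star z))).re := by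
        rw [map_add, Complex.add_re]; ring
    _ ≤ (‖y‖ / 2) * ‖cfc φ (x * star x) + cfc φ (z * star z)‖ := by
        gcongr
        exact PositiveLinearMap.re_apply_le_norm hf1
          (add_nonneg (hcfc (mul_star_self_nonneg x)) (hcfc (mul_star_self_nonneg z)))

end IsOrlicz

/-- `φ(v(x y z*)) ≤ (‖y‖/2) ‖φ(x x*) + φ(z z*)‖` when `‖y‖ ≤ 1`. -/
theorem stmt16 (x y z : A) (hy : ‖y‖ ≤ 1) (φ : ℝ → ℝ) (hφ : IsOrlicz φ) :
    φ (nr (x * y * star z)) ≤ (‖y‖ / 2) * ‖cfc φ (x * star x) + cfc φ (z * star z)‖ := by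
  refine hφ.map_csSup_le ?_ ⟨‖x * y * star z‖, ?_⟩ (by positivity) ?_
  · rintro _ ⟨g, -, rfl⟩
    exact norm_nonneg _
  · rintro _ ⟨g, hg, rfl⟩
    exact hg.1.toPositiveLinearMap.norm_apply_le hg.2 _
  · rintro _ ⟨g, hg, rfl⟩
    exact hφ.map_norm_apply_mul_mul_star_le (f := hg.1.toPositiveLinearMap) hg.2 x y z hy

end
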